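/- Fix a vertex k₀ ∈ I. Let (B^1,i^1,j^1) on (V^1,W) and (B^2,i^2,j^2) on (V^2,W) be stable ADHM data with μ(B^1,i^1,j^1) = 0 and μ(B^2,i^2,j^2) = 0, and with dim V^2_{k₀} = dim V^1_{k₀} + 1 and dim V^2_l = dim V^1_l for l ≠ k₀. Consider the three-term sequence of linear maps L(V^1,V^2) --σ--> E(V^1,V^2) ⊕ L(W,V^2) ⊕ L(V^1,W) --τ--> L(V^1,V^2) ⊕ ℂ, where σ(ξ) = ((B^2_h∘ξ_{out(h)} − ξ_{in(h)}∘B^1_h)_h, (−ξ_k∘i^1_k)_k, (j^2_k∘ξ_k)_k) and τ(C,a,b) = ((Σ_{h : in(h)=k} ε(h)(B^2_h∘C_{h̄} + C_h∘B^1_{h̄}) + i^2_k∘b_k + a_k∘j^1_k)_k, Σ_{k∈I} (tr(i^1_k∘b_k) + tr(a_k∘j^2_k))). Then τ∘σ = 0, σ is injective, and τ is surjective. (This exhibits the Hecke correspondence as the zero locus of a section of the vector bundle ker τ / im σ.) -/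

import Mathlib

noncomputable section

/-- The data of a finite graph without edge loops, presented by its set `H` of oriented
edges over the vertex set `I`: source and target maps `src`, `tgt`, and a fixed-point-free
orientation-reversing involution `bar`. -/
structure GraphData (I H : Type) where
  src : H → I
  tgt : H → I
  bar : H → H
  bar_invol : ∀ h, bar (bar h) = h
  bar_ne_self : ∀ h, bar h ≠ h
  src_bar : ∀ h, src (bar h) = tgt h
  tgt_bar : ∀ h, tgt (bar h) = src h
  no_loops : ∀ h, src h ≠ tgt h

/-- Transport of the fibres of a family of normed spaces along an equality of indices. -/
def vCast {I : Type} (V : I → Type)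
    [∀ k, NormedAddCommGroup (V k)] [∀ k, NormedSpace ℂ (V k)]
    {k l : I} (e : k = l) : V k ≃L[ℂ] V l := by
  subst e
  exact ContinuousLinearEquiv.refl ℂ (V k)

/-- Stability of an ADHM datum `(B, i, j)`: the only family of subspaces `S k ⊆ V k`
which is `B`-invariant and contained in `ker (j k)` is the zero family. -/
def IsStable {I H : Type} (G : GraphData I H) (V W : I → Type)
    [∀ k, NormedAddCommGroup (V k)] [∀ k, NormedSpace ℂ (V k)]
    [∀ k, NormedAddCommGroup (W k)] [∀ k, NormedSpace ℂ (W k)]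
    (B : ∀ h : H, V (G.src h) →L[ℂ] V (G.tgt h))
    (j : ∀ k : I, V k →L[ℂ] W k) : Prop :=
  ∀ S : ∀ k : I, Submodule ℂ (V k),
    (∀ h : H, ∀ x ∈ S (G.src h), B h x ∈ S (G.tgt h)) →
    (∀ k : I, ∀ x ∈ S k, j k x = 0) →
    ∀ k : I, S k = ⊥

/-- For an oriented edge `h`, the composite `A ∘ A'` of a map `A` along `h` and a map `A'`
along `bar h`, as an endomorphism of `V (tgt h)`. -/
def barComp {I H : Type} (G : GraphData I H) (V : I → Type)
    [∀ k, NormedAddCommGroup (V k)] [∀ k, NormedSpace ℂ (V k)] (h : H)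
    (A : V (G.src h) →L[ℂ] V (G.tgt h))
    (A' : V (G.src (G.bar h)) →L[ℂ] V (G.tgt (G.bar h))) :
    V (G.tgt h) →L[ℂ] V (G.tgt h) :=
  A.comp ((vCast V (G.tgt_bar h) : V (G.tgt (G.bar h)) →L[ℂ] V (G.src h)).comp
    (A'.comp ((vCast V (G.src_bar h)).symm : V (G.tgt h) →L[ℂ] V (G.src (G.bar h)))))

/-- The `k`-th component of the moment map `μ(B, i, j) = ε B B + i j`. -/
def momentMap {I H : Type} [Fintype H] [DecidableEq I] (G : GraphData I H)
    (V W : I → Type)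
    [∀ k, NormedAddCommGroup (V k)] [∀ k, NormedSpace ℂ (V k)]
    [∀ k, NormedAddCommGroup (W k)] [∀ k, NormedSpace ℂ (W k)]
    (ε : H → ℂ)
    (B : ∀ h : H, V (G.src h) →L[ℂ] V (G.tgt h))
    (i : ∀ k : I, W k →L[ℂ] V k) (j : ∀ k : I, V k →L[ℂ] W k) (k : I) :
    V k →L[ℂ] V k :=
  (∑ h : H, if e : G.tgt h = k then
      ((vCast V e : V (G.tgt h) →L[ℂ] V k).comp
        ((ε h • barComp G V h (B h) (B (G.bar h))).comp
          ((vCast V e).symm : V k →L[ℂ] V (G.tgt h))))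
    else 0)
    + (i k).comp (j k)

/-- `A ∘ C'` where `A : V²(src h) → V²(tgt h)` is a map along `h` and
`C' : V¹(src h̄) → V²(tgt h̄)` is a mixed map along `bar h`, as a map
`V¹(tgt h) → V²(tgt h)`. -/
def mixCompA {I H : Type} (G : GraphData I H) (V1 V2 : I → Type)
    [∀ k, NormedAddCommGroup (V1 k)] [∀ k, NormedSpace ℂ (V1 k)]
    [∀ k, NormedAddCommGroup (V2 k)] [∀ k, NormedSpace ℂ (V2 k)] (h : H)
    (A : V2 (G.src h) →L[ℂ] V2 (G.tgt h))
    (C' : V1 (G.src (G.bar h)) →L[ℂ] V2 (G.tgt (G.bar h))) :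
    V1 (G.tgt h) →L[ℂ] V2 (G.tgt h) :=
  A.comp ((vCast V2 (G.tgt_bar h) : V2 (G.tgt (G.bar h)) →L[ℂ] V2 (G.src h)).comp
    (C'.comp ((vCast V1 (G.src_bar h)).symm : V1 (G.tgt h) →L[ℂ] V1 (G.src (G.bar h)))))

/-- `C ∘ A'` where `C : V¹(src h) → V²(tgt h)` is a mixed map along `h` and
`A' : V¹(src h̄) → V¹(tgt h̄)` is a map along `bar h`, as a map
`V¹(tgt h) → V²(tgt h)`. -/
def mixCompB {I H : Type} (G : GraphData I H) (V1 V2 : I → Type)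
    [∀ k, NormedAddCommGroup (V1 k)] [∀ k, NormedSpace ℂ (V1 k)]
    [∀ k, NormedAddCommGroup (V2 k)] [∀ k, NormedSpace ℂ (V2 k)] (h : H)
    (C : V1 (G.src h) →L[ℂ] V2 (G.tgt h))
    (A' : V1 (G.src (G.bar h)) →L[ℂ] V1 (G.tgt (G.bar h))) :
    V1 (G.tgt h) →L[ℂ] V2 (G.tgt h) :=
  C.comp ((vCast V1 (G.tgt_bar h) : V1 (G.tgt (G.bar h)) →L[ℂ] V1 (G.src h)).comp
    (A'.comp ((vCast V1 (G.src_bar h)).symm : V1 (G.tgt h) →L[ℂ] V1 (G.src (G.bar h)))))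

/-- The map `σ : L(V¹,V²) → E(V¹,V²) ⊕ L(W,V²) ⊕ L(V¹,W)` of the Hecke complex. -/
def heckeSigma {I H : Type} (G : GraphData I H) (V1 V2 W : I → Type)
    [∀ k, NormedAddCommGroup (V1 k)] [∀ k, NormedSpace ℂ (V1 k)]
    [∀ k, NormedAddCommGroup (V2 k)] [∀ k, NormedSpace ℂ (V2 k)]
    [∀ k, NormedAddCommGroup (W k)] [∀ k, NormedSpace ℂ (W k)]
    (B1 : ∀ h : H, V1 (G.src h) →L[ℂ] V1 (G.tgt h))
    (B2 : ∀ h : H, V2 (G.src h) →L[ℂ] V2 (G.tgt h))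
    (i1 : ∀ k : I, W k →L[ℂ] V1 k)
    (j2 : ∀ k : I, V2 k →L[ℂ] W k)
    (ξ : ∀ k : I, V1 k →L[ℂ] V2 k) :
    (∀ h : H, V1 (G.src h) →L[ℂ] V2 (G.tgt h)) ×
      (∀ k : I, W k →L[ℂ] V2 k) × (∀ k : I, V1 k →L[ℂ] W k) :=
  (fun h => (B2 h).comp (ξ (G.src h)) - (ξ (G.tgt h)).comp (B1 h),
   fun k => -((ξ k).comp (i1 k)),
   fun k => (j2 k).comp (ξ k))

/-- The map `τ : E(V¹,V²) ⊕ L(W,V²) ⊕ L(V¹,W) → L(V¹,V²) ⊕ ℂ` of the Hecke complex. -/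
def heckeTau {I H : Type} [Fintype I] [Fintype H] [DecidableEq I]
    (G : GraphData I H) (V1 V2 W : I → Type)
    [∀ k, NormedAddCommGroup (V1 k)] [∀ k, NormedSpace ℂ (V1 k)]
    [∀ k, NormedAddCommGroup (V2 k)] [∀ k, NormedSpace ℂ (V2 k)]
    [∀ k, NormedAddCommGroup (W k)] [∀ k, NormedSpace ℂ (W k)]
    (ε : H → ℂ)
    (B1 : ∀ h : H, V1 (G.src h) →L[ℂ] V1 (G.tgt h))
    (B2 : ∀ h : H, V2 (G.src h) →L[ℂ] V2 (G.tgt h))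
    (i1 : ∀ k : I, W k →L[ℂ] V1 k) (i2 : ∀ k : I, W k →L[ℂ] V2 k)
    (j1 : ∀ k : I, V1 k →L[ℂ] W k) (j2 : ∀ k : I, V2 k →L[ℂ] W k)
    (p : (∀ h : H, V1 (G.src h) →L[ℂ] V2 (G.tgt h)) ×
      (∀ k : I, W k →L[ℂ] V2 k) × (∀ k : I, V1 k →L[ℂ] W k)) :
    (∀ k : I, V1 k →L[ℂ] V2 k) × ℂ :=
  (fun k =>
    (∑ h : H, if e : G.tgt h = k then
        ((vCast V2 e : V2 (G.tgt h) →L[ℂ] V2 k).comp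
          ((ε h • (mixCompA G V1 V2 h (B2 h) (p.1 (G.bar h))
              + mixCompB G V1 V2 h (p.1 h) (B1 (G.bar h)))).comp
            ((vCast V1 e).symm : V1 k →L[ℂ] V1 (G.tgt h))))
      else 0)
    + (i2 k).comp (p.2.2 k) + (p.2.1 k).comp (j1 k),
   ∑ k : I, (LinearMap.trace ℂ (V1 k) ((i1 k).comp (p.2.2 k)).toLinearMap
     + LinearMap.trace ℂ (V2 k) ((p.2.1 k).comp (j2 k)).toLinearMap))

set_option linter.unusedSectionVars false
set_option maxHeartbeats 1000000

/-! ### Auxiliary lemmas -/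

section VCast

variable {I : Type} {V V1 V2 : I → Type}
    [∀ k, NormedAddCommGroup (V k)] [∀ k, NormedSpace ℂ (V k)]
    [∀ k, NormedAddCommGroup (V1 k)] [∀ k, NormedSpace ℂ (V1 k)]
    [∀ k, NormedAddCommGroup (V2 k)] [∀ k, NormedSpace ℂ (V2 k)]

@[simp] lemma vCast_self_apply {k : I} (e : k = k) (x : V k) : vCast V e x = x := rfl

@[simp] lemma vCast_symm_apply {k l : I} (e : k = l) (x : V l) :
    (vCast V e).symm x = vCast V e.symm x := by subst e; rfl

@[simp] lemma vCast_vCast {k l m : I} (e1 : k = l) (e2 : l = m) (x : V k) :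
    vCast V e2 (vCast V e1 x) = vCast V (e1.trans e2) x := by subst e1; subst e2; rfl

lemma vCast_natural (ξ : ∀ k : I, V1 k →L[ℂ] V2 k) {k l : I} (e : k = l) (x : V1 k) :
    ξ l (vCast V1 e x) = vCast V2 e (ξ k x) := by subst e; rfl

lemma vCast_natural_symm (ξ : ∀ k : I, V1 k →L[ℂ] V2 k) {k l : I} (e : k = l) (x : V1 l) :
    ξ k ((vCast V1 e).symm x) = (vCast V2 e).symm (ξ l x) := by subst e; rfl

end VCast

section Trace

open LinearMap

variable {M N : Type} [NormedAddCommGroup M] [NormedSpace ℂ M] [FiniteDimensional ℂ M]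
  [NormedAddCommGroup N] [NormedSpace ℂ N] [FiniteDimensional ℂ N]

lemma eq_zero_of_trace_comp_eq_zero (g : N →ₗ[ℂ] M)
    (hg : ∀ f : M →ₗ[ℂ] N, trace ℂ M (g ∘ₗ f) = 0) : g = 0 := by
  ext v
  rw [LinearMap.zero_apply, ← Module.forall_dual_apply_eq_zero_iff ℂ]
  intro ψ
  have h1 : g ∘ₗ dualTensorHom ℂ M N (ψ ⊗ₜ v) = dualTensorHom ℂ M M (ψ ⊗ₜ g v) := by
    ext m; simp [dualTensorHom_apply, map_smul]
  have := hg (dualTensorHom ℂ M N (ψ ⊗ₜ v))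
  rw [h1, trace_eq_contract_apply, contractLeft_apply] at this
  exact this

/-- The trace pairing `Hom(N,M) → Hom(M,N)*`. -/
def tracePairing (M N : Type) [NormedAddCommGroup M] [NormedSpace ℂ M]
    [NormedAddCommGroup N] [NormedSpace ℂ N] :
    (N →ₗ[ℂ] M) →ₗ[ℂ] Module.Dual ℂ (M →ₗ[ℂ] N) where
  toFun g := (trace ℂ M) ∘ₗ (llcomp ℂ M N M g)
  map_add' g₁ g₂ := by ext f; simp
  map_smul' a g := by ext f; simp

lemma tracePairing_surjective : Function.Surjective (tracePairing M N) := by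
  have hinj : Function.Injective (tracePairing M N) := by
    rw [← LinearMap.ker_eq_bot, eq_bot_iff]
    intro g hg
    simp only [LinearMap.mem_ker] at hg
    have : ∀ f : M →ₗ[ℂ] N, trace ℂ M (g ∘ₗ f) = 0 := fun f =>
      congrFun (congrArg DFunLike.coe hg) f
    simp [eq_zero_of_trace_comp_eq_zero g this]
  have hfr : Module.finrank ℂ (N →ₗ[ℂ] M) = Module.finrank ℂ (Module.Dual ℂ (M →ₗ[ℂ] N)) := by
    rw [Module.finrank_linearMap, Subspace.dual_finrank_eq, Module.finrank_linearMap, mul_comm]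
  exact (LinearMap.injective_iff_surjective_of_finrank_eq_finrank hfr).mp hinj

instance : FiniteDimensional ℂ (M →L[ℂ] N) :=
  (LinearMap.toContinuousLinearMap (E := M) (F' := N)).finiteDimensional

lemma trace_comp_comm_clm (f : M →L[ℂ] N) (g : N →L[ℂ] M) :
    trace ℂ M ((g.comp f).toLinearMap) = trace ℂ N ((f.comp g).toLinearMap) := by
  rw [ContinuousLinearMap.toLinearMap_comp, ContinuousLinearMap.toLinearMap_comp, trace_comp_comm']

lemma clm_eq_zero_of_trace_comp (g : N →L[ℂ] M)
    (hg : ∀ f : M →L[ℂ] N, trace ℂ M ((g.comp f).toLinearMap) = 0) : g = 0 := by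
  have : (g : N →ₗ[ℂ] M) = 0 := by
    apply eq_zero_of_trace_comp_eq_zero
    intro f
    have := hg (LinearMap.toContinuousLinearMap f)
    rwa [ContinuousLinearMap.toLinearMap_comp, LinearMap.coe_toContinuousLinearMap] at this
  exact ContinuousLinearMap.coe_injective this

lemma exists_trace_rep (φ : Module.Dual ℂ (M →L[ℂ] N)) :
    ∃ g : N →L[ℂ] M, ∀ f : M →L[ℂ] N, φ f = trace ℂ M ((g.comp f).toLinearMap) := by
  obtain ⟨g₀, hg₀⟩ := tracePairing_surjective
    (φ ∘ₗ (LinearMap.toContinuousLinearMap (E := M) (F' := N)).toLinearMap)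
  refine ⟨LinearMap.toContinuousLinearMap g₀, fun f => ?_⟩
  have := congrFun (congrArg DFunLike.coe hg₀) (LinearMap.toContinuousLinearMap.symm f)
  simp only [LinearMap.coe_comp, LinearEquiv.coe_coe, Function.comp_apply,
    LinearEquiv.apply_symm_apply] at this
  rw [← this]
  simp [tracePairing, ContinuousLinearMap.coe_comp, llcomp_apply']

lemma trace_rot3_clm {P : Type} [NormedAddCommGroup P] [NormedSpace ℂ P]
    [FiniteDimensional ℂ P] (A : M →L[ℂ] N) (Bq : N →L[ℂ] P) (Cq : P →L[ℂ] M) :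
    trace ℂ M ((Cq.comp (Bq.comp A)).toLinearMap)
      = trace ℂ N ((A.comp (Cq.comp Bq)).toLinearMap) := by
  simp only [ContinuousLinearMap.toLinearMap_comp]
  rw [← LinearMap.comp_assoc, trace_comp_comm']

end Trace

section PartA

variable {I H : Type} (G : GraphData I H) (V1 V2 W : I → Type)
    [∀ k, NormedAddCommGroup (V1 k)] [∀ k, NormedSpace ℂ (V1 k)]
    [∀ k, NormedAddCommGroup (V2 k)] [∀ k, NormedSpace ℂ (V2 k)]
    [∀ k, NormedAddCommGroup (W k)] [∀ k, NormedSpace ℂ (W k)]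
    (ε : H → ℂ)
    (B1 : ∀ h : H, V1 (G.src h) →L[ℂ] V1 (G.tgt h))
    (B2 : ∀ h : H, V2 (G.src h) →L[ℂ] V2 (G.tgt h))
    (i1 : ∀ k : I, W k →L[ℂ] V1 k) (i2 : ∀ k : I, W k →L[ℂ] V2 k)
    (j1 : ∀ k : I, V1 k →L[ℂ] W k) (j2 : ∀ k : I, V2 k →L[ℂ] W k)
    (ξ : ∀ k : I, V1 k →L[ℂ] V2 k)

lemma partA_edge (h : H) (x : V1 (G.tgt h)) :
    (ε h • (mixCompA G V1 V2 h (B2 h) ((heckeSigma G V1 V2 W B1 B2 i1 j2 ξ).1 (G.bar h))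
        + mixCompB G V1 V2 h ((heckeSigma G V1 V2 W B1 B2 i1 j2 ξ).1 h) (B1 (G.bar h)))) x
    = (ε h • barComp G V2 h (B2 h) (B2 (G.bar h))) (ξ (G.tgt h) x)
      - ξ (G.tgt h) ((ε h • barComp G V1 h (B1 h) (B1 (G.bar h))) x) := by
  simp only [heckeSigma, mixCompA, mixCompB, barComp, ContinuousLinearMap.smul_apply,
    ContinuousLinearMap.add_apply, ContinuousLinearMap.comp_apply,
    ContinuousLinearMap.sub_apply, ContinuousLinearEquiv.coe_coe, map_sub, map_smul,
    vCast_symm_apply, ← vCast_natural]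
  module

variable [Fintype H] [Fintype I] [DecidableEq I]
    [∀ k, FiniteDimensional ℂ (V1 k)] [∀ k, FiniteDimensional ℂ (V2 k)]
    [∀ k, FiniteDimensional ℂ (W k)]

lemma partA_dite (h : H) (k : I) :
    (if e : G.tgt h = k then
        ((vCast V2 e : V2 (G.tgt h) →L[ℂ] V2 k).comp
          ((ε h • (mixCompA G V1 V2 h (B2 h) ((heckeSigma G V1 V2 W B1 B2 i1 j2 ξ).1 (G.bar h))
              + mixCompB G V1 V2 h ((heckeSigma G V1 V2 W B1 B2 i1 j2 ξ).1 h) (B1 (G.bar h)))).comp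
            ((vCast V1 e).symm : V1 k →L[ℂ] V1 (G.tgt h))))
      else 0)
    = (if e : G.tgt h = k then
        ((vCast V2 e : V2 (G.tgt h) →L[ℂ] V2 k).comp
          ((ε h • barComp G V2 h (B2 h) (B2 (G.bar h))).comp
            ((vCast V2 e).symm : V2 k →L[ℂ] V2 (G.tgt h)))) else 0).comp (ξ k)
      - (ξ k).comp (if e : G.tgt h = k then
        ((vCast V1 e : V1 (G.tgt h) →L[ℂ] V1 k).comp
          ((ε h • barComp G V1 h (B1 h) (B1 (G.bar h))).comp
            ((vCast V1 e).symm : V1 k →L[ℂ] V1 (G.tgt h)))) else 0) := by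
  split_ifs with e
  · subst e
    ext x
    have := partA_edge G V1 V2 W ε B1 B2 i1 j2 ξ h x
    simp only [ContinuousLinearMap.comp_apply, ContinuousLinearMap.sub_apply,
      ContinuousLinearEquiv.coe_coe, vCast_self_apply, vCast_symm_apply]
    simpa using this
  · simp

lemma partA_first (k : I) :
    (heckeTau G V1 V2 W ε B1 B2 i1 i2 j1 j2 (heckeSigma G V1 V2 W B1 B2 i1 j2 ξ)).1 k
    = (momentMap G V2 W ε B2 i2 j2 k).comp (ξ k)
      - (ξ k).comp (momentMap G V1 W ε B1 i1 j1 k) := by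
  simp only [heckeTau, momentMap]
  rw [Finset.sum_congr rfl (fun h _ => partA_dite G V1 V2 W ε B1 B2 i1 j2 ξ h k),
    Finset.sum_sub_distrib, ← ContinuousLinearMap.finset_sum_comp,
    ← ContinuousLinearMap.comp_finset_sum]
  simp only [heckeSigma, ContinuousLinearMap.add_comp, ContinuousLinearMap.comp_add,
    ContinuousLinearMap.neg_comp, ContinuousLinearMap.comp_assoc]
  abel

lemma partA_second :
    (heckeTau G V1 V2 W ε B1 B2 i1 i2 j1 j2 (heckeSigma G V1 V2 W B1 B2 i1 j2 ξ)).2 = 0 := by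
  simp only [heckeTau, heckeSigma]
  refine Finset.sum_eq_zero fun k _ => ?_
  have h1 : LinearMap.trace ℂ (V1 k) ((i1 k).comp ((j2 k).comp (ξ k))).toLinearMap
      = LinearMap.trace ℂ (V2 k) (((ξ k).comp (i1 k)).comp (j2 k)).toLinearMap := by
    rw [trace_comp_comm_clm ((j2 k).comp (ξ k)) (i1 k), ContinuousLinearMap.comp_assoc,
      trace_comp_comm_clm (j2 k) ((ξ k).comp (i1 k))]
  rw [h1]
  simp [ContinuousLinearMap.neg_comp]

end PartA

section PartB

variable {I H : Type} (G : GraphData I H) (V1 V2 W : I → Type)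
    [∀ k, NormedAddCommGroup (V1 k)] [∀ k, NormedSpace ℂ (V1 k)]
    [∀ k, NormedAddCommGroup (V2 k)] [∀ k, NormedSpace ℂ (V2 k)]
    [∀ k, NormedAddCommGroup (W k)] [∀ k, NormedSpace ℂ (W k)]

@[simp] lemma vCast_self_coe {V : I → Type} [∀ k, NormedAddCommGroup (V k)]
    [∀ k, NormedSpace ℂ (V k)] {k : I} (e : k = k) :
    ((vCast V e : V k ≃L[ℂ] V k) : V k →L[ℂ] V k) = ContinuousLinearMap.id ℂ (V k) := rfl

@[simp] lemma vCast_self_symm_coe {V : I → Type} [∀ k, NormedAddCommGroup (V k)]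
    [∀ k, NormedSpace ℂ (V k)] {k : I} (e : k = k) :
    (((vCast V e).symm : V k ≃L[ℂ] V k) : V k →L[ℂ] V k) = ContinuousLinearMap.id ℂ (V k) := rfl

@[simp] lemma mixCompA_zero (h : H) (A : V2 (G.src h) →L[ℂ] V2 (G.tgt h)) :
    mixCompA G V1 V2 h A 0 = 0 := by
  ext x; simp [mixCompA]

@[simp] lemma mixCompB_zero (h : H) (A' : V1 (G.src (G.bar h)) →L[ℂ] V1 (G.tgt (G.bar h))) :
    mixCompB G V1 V2 h 0 A' = 0 := by
  ext x; simp [mixCompB]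

lemma fam_congr (D : ∀ h : H, V1 (G.src h) →L[ℂ] V2 (G.tgt h)) {h1 h2 : H} (e : h1 = h2) :
    D h2 = (vCast V2 (congrArg G.tgt e) : V2 (G.tgt h1) →L[ℂ] V2 (G.tgt h2)).comp
      ((D h1).comp ((vCast V1 (congrArg G.src e)).symm : V1 (G.src h2) →L[ℂ] V1 (G.src h1))) := by
  subst e; ext x; rfl

lemma sigma_injective
    (B1 : ∀ h : H, V1 (G.src h) →L[ℂ] V1 (G.tgt h))
    (B2 : ∀ h : H, V2 (G.src h) →L[ℂ] V2 (G.tgt h))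
    (i1 : ∀ k : I, W k →L[ℂ] V1 k) (j2 : ∀ k : I, V2 k →L[ℂ] W k)
    (hst2 : IsStable G V2 W B2 j2) :
    Function.Injective (heckeSigma G V1 V2 W B1 B2 i1 j2) := by
  intro ξ ξ' hξ
  have h1 : ∀ h : H, (B2 h).comp (ξ (G.src h)) - (ξ (G.tgt h)).comp (B1 h)
      = (B2 h).comp (ξ' (G.src h)) - (ξ' (G.tgt h)).comp (B1 h) :=
    fun h => congrFun (congrArg Prod.fst hξ) h
  have h3 : ∀ k, (j2 k).comp (ξ k) = (j2 k).comp (ξ' k) :=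
    fun k => congrFun (congrArg (fun p => p.2.2) hξ) k
  have hB : ∀ (h : H) (x : V1 (G.src h)),
      B2 h ((ξ (G.src h) - ξ' (G.src h)) x) = (ξ (G.tgt h) - ξ' (G.tgt h)) (B1 h x) := by
    intro h x
    have := ContinuousLinearMap.ext_iff.mp (h1 h) x
    simp only [ContinuousLinearMap.sub_apply, ContinuousLinearMap.comp_apply] at this ⊢
    rw [map_sub]
    rw [sub_eq_sub_iff_sub_eq_sub] at this
    exact this
  have hj : ∀ (k : I) (x : V1 k), j2 k ((ξ k - ξ' k) x) = 0 := by
    intro k x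
    have := ContinuousLinearMap.ext_iff.mp (h3 k) x
    simp only [ContinuousLinearMap.comp_apply, ContinuousLinearMap.sub_apply, map_sub] at this ⊢
    rw [this, sub_self]
  have hS := hst2 (fun k => LinearMap.range ((ξ k - ξ' k : V1 k →L[ℂ] V2 k) : V1 k →ₗ[ℂ] V2 k))
    (by
      rintro h x ⟨y, rfl⟩
      exact ⟨B1 h y, (hB h y).symm⟩)
    (by
      rintro k x ⟨y, rfl⟩
      exact hj k y)
  funext k
  have hzero : ((ξ k - ξ' k : V1 k →L[ℂ] V2 k) : V1 k →ₗ[ℂ] V2 k) = 0 :=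
    LinearMap.range_eq_bot.mp (hS k)
  have hzero' : (ξ k - ξ' k : V1 k →L[ℂ] V2 k) = 0 :=
    ContinuousLinearMap.coe_injective (by simpa using hzero)
  exact sub_eq_zero.mp hzero'

end PartB

section PartC

open LinearMap

variable {I H : Type} (G : GraphData I H) (V1 V2 W : I → Type)
    [∀ k, NormedAddCommGroup (V1 k)] [∀ k, NormedSpace ℂ (V1 k)]
    [∀ k, NormedAddCommGroup (V2 k)] [∀ k, NormedSpace ℂ (V2 k)]
    [∀ k, NormedAddCommGroup (W k)] [∀ k, NormedSpace ℂ (W k)]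
    [Fintype H] [Fintype I] [DecidableEq I] [DecidableEq H]
    [∀ k, FiniteDimensional ℂ (V1 k)] [∀ k, FiniteDimensional ℂ (V2 k)]
    [∀ k, FiniteDimensional ℂ (W k)]
    (ε : H → ℂ)
    (B1 : ∀ h : H, V1 (G.src h) →L[ℂ] V1 (G.tgt h))
    (B2 : ∀ h : H, V2 (G.src h) →L[ℂ] V2 (G.tgt h))
    (i1 : ∀ k : I, W k →L[ℂ] V1 k) (i2 : ∀ k : I, W k →L[ℂ] V2 k)
    (j1 : ∀ k : I, V1 k →L[ℂ] W k) (j2 : ∀ k : I, V2 k →L[ℂ] W k)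

/-- A single term of the edge sum in `heckeTau`. -/
def tauTerm (C : ∀ h : H, V1 (G.src h) →L[ℂ] V2 (G.tgt h)) (h : H) (k : I) :
    V1 k →L[ℂ] V2 k :=
  if e : G.tgt h = k then
    ((vCast V2 e : V2 (G.tgt h) →L[ℂ] V2 k).comp
      ((ε h • (mixCompA G V1 V2 h (B2 h) (C (G.bar h))
          + mixCompB G V1 V2 h (C h) (B1 (G.bar h)))).comp
        ((vCast V1 e).symm : V1 k →L[ℂ] V1 (G.tgt h))))
  else 0

lemma heckeTau_fst (p) (k : I) :
    (heckeTau G V1 V2 W ε B1 B2 i1 i2 j1 j2 p).1 k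
    = (∑ h : H, tauTerm G V1 V2 ε B1 B2 p.1 h k)
      + (i2 k).comp (p.2.2 k) + (p.2.1 k).comp (j1 k) := rfl

lemma tauTerm_add (C C' : ∀ h : H, V1 (G.src h) →L[ℂ] V2 (G.tgt h)) (h : H) (k : I) :
    tauTerm G V1 V2 ε B1 B2 (C + C') h k
    = tauTerm G V1 V2 ε B1 B2 C h k + tauTerm G V1 V2 ε B1 B2 C' h k := by
  unfold tauTerm
  split_ifs with e
  · ext x
    simp [mixCompA, mixCompB, smul_add, Pi.add_apply, ContinuousLinearMap.add_comp,
      ContinuousLinearMap.comp_add, ContinuousLinearMap.add_apply, smul_add]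
    module
  · simp

lemma tauTerm_smul (a : ℂ) (C : ∀ h : H, V1 (G.src h) →L[ℂ] V2 (G.tgt h)) (h : H) (k : I) :
    tauTerm G V1 V2 ε B1 B2 (a • C) h k = a • tauTerm G V1 V2 ε B1 B2 C h k := by
  unfold tauTerm
  split_ifs with e
  · ext x
    simp [mixCompA, mixCompB, Pi.smul_apply, ContinuousLinearMap.smul_comp,
      ContinuousLinearMap.comp_smul, ContinuousLinearMap.smul_apply, smul_add]
    module
  · simp

@[simp] lemma tauTerm_zero (h : H) (k : I) :
    tauTerm G V1 V2 ε B1 B2 0 h k = 0 := by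
  unfold tauTerm
  split_ifs with e <;> simp

/-- `heckeTau` as a linear map. -/
def heckeTauL :
    ((∀ h : H, V1 (G.src h) →L[ℂ] V2 (G.tgt h)) ×
      (∀ k : I, W k →L[ℂ] V2 k) × (∀ k : I, V1 k →L[ℂ] W k)) →ₗ[ℂ]
    ((∀ k : I, V1 k →L[ℂ] V2 k) × ℂ) where
  toFun := heckeTau G V1 V2 W ε B1 B2 i1 i2 j1 j2
  map_add' p q := by
    refine Prod.ext ?_ ?_
    · funext k
      show (heckeTau G V1 V2 W ε B1 B2 i1 i2 j1 j2 (p + q)).1 k = _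
      rw [heckeTau_fst]
      have : (heckeTau G V1 V2 W ε B1 B2 i1 i2 j1 j2 p
          + heckeTau G V1 V2 W ε B1 B2 i1 i2 j1 j2 q).1 k
          = (heckeTau G V1 V2 W ε B1 B2 i1 i2 j1 j2 p).1 k
            + (heckeTau G V1 V2 W ε B1 B2 i1 i2 j1 j2 q).1 k := rfl
      rw [this, heckeTau_fst, heckeTau_fst]
      have hsum : ∑ h : H, tauTerm G V1 V2 ε B1 B2 (p + q).1 h k
          = ∑ h : H, (tauTerm G V1 V2 ε B1 B2 p.1 h k + tauTerm G V1 V2 ε B1 B2 q.1 h k) :=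
        Finset.sum_congr rfl fun h _ => by
          rw [show (p + q).1 = p.1 + q.1 from rfl, tauTerm_add]
      rw [hsum, Finset.sum_add_distrib]
      have h2 : (p + q).2.2 k = p.2.2 k + q.2.2 k := rfl
      have h1 : (p + q).2.1 k = p.2.1 k + q.2.1 k := rfl
      rw [h2, h1, ContinuousLinearMap.comp_add, ContinuousLinearMap.add_comp]
      abel
    · show (heckeTau G V1 V2 W ε B1 B2 i1 i2 j1 j2 (p + q)).2 = _
      have : (heckeTau G V1 V2 W ε B1 B2 i1 i2 j1 j2 p
          + heckeTau G V1 V2 W ε B1 B2 i1 i2 j1 j2 q).2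
          = (heckeTau G V1 V2 W ε B1 B2 i1 i2 j1 j2 p).2
            + (heckeTau G V1 V2 W ε B1 B2 i1 i2 j1 j2 q).2 := rfl
      rw [this]
      show ∑ k : I, _ = (∑ k : I, _) + ∑ k : I, _
      rw [← Finset.sum_add_distrib]
      refine Finset.sum_congr rfl fun k _ => ?_
      have h2 : (p + q).2.2 k = p.2.2 k + q.2.2 k := rfl
      have h1 : (p + q).2.1 k = p.2.1 k + q.2.1 k := rfl
      rw [h2, h1, ContinuousLinearMap.comp_add, ContinuousLinearMap.add_comp]
      push_cast [ContinuousLinearMap.coe_add]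
      rw [map_add, map_add]
      ring
  map_smul' a p := by
    refine Prod.ext ?_ ?_
    · funext k
      show (heckeTau G V1 V2 W ε B1 B2 i1 i2 j1 j2 (a • p)).1 k = _
      have : (RingHom.id ℂ a • heckeTau G V1 V2 W ε B1 B2 i1 i2 j1 j2 p).1 k
          = a • (heckeTau G V1 V2 W ε B1 B2 i1 i2 j1 j2 p).1 k := rfl
      rw [this, heckeTau_fst, heckeTau_fst]
      have hsum : ∑ h : H, tauTerm G V1 V2 ε B1 B2 (a • p).1 h k
          = a • ∑ h : H, tauTerm G V1 V2 ε B1 B2 p.1 h k := by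
        rw [Finset.smul_sum]
        exact Finset.sum_congr rfl fun h _ => by
          rw [show (a • p).1 = a • p.1 from rfl, tauTerm_smul]
      have h2 : (a • p).2.2 k = a • p.2.2 k := rfl
      have h1 : (a • p).2.1 k = a • p.2.1 k := rfl
      rw [hsum, h2, h1, ContinuousLinearMap.comp_smul, ContinuousLinearMap.smul_comp]
      simp [smul_add]
    · show (heckeTau G V1 V2 W ε B1 B2 i1 i2 j1 j2 (a • p)).2 = _
      have : (RingHom.id ℂ a • heckeTau G V1 V2 W ε B1 B2 i1 i2 j1 j2 p).2
          = a * (heckeTau G V1 V2 W ε B1 B2 i1 i2 j1 j2 p).2 := rfl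
      rw [this]
      show ∑ k : I, _ = a * ∑ k : I, _
      rw [Finset.mul_sum]
      refine Finset.sum_congr rfl fun k _ => ?_
      have h2 : (a • p).2.2 k = a • p.2.2 k := rfl
      have h1 : (a • p).2.1 k = a • p.2.1 k := rfl
      rw [h2, h1, ContinuousLinearMap.comp_smul, ContinuousLinearMap.smul_comp]
      push_cast [ContinuousLinearMap.coe_smul]
      rw [map_smul, map_smul]
      simp [smul_eq_mul]
      ring
end PartC

section PartD

open LinearMap

variable {I H : Type} (G : GraphData I H) (V1 V2 W : I → Type)
    [∀ k, NormedAddCommGroup (V1 k)] [∀ k, NormedSpace ℂ (V1 k)]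
    [∀ k, NormedAddCommGroup (V2 k)] [∀ k, NormedSpace ℂ (V2 k)]
    [∀ k, NormedAddCommGroup (W k)] [∀ k, NormedSpace ℂ (W k)]
    [Fintype H] [Fintype I] [DecidableEq I] [DecidableEq H]
    [∀ k, FiniteDimensional ℂ (V1 k)] [∀ k, FiniteDimensional ℂ (V2 k)]
    [∀ k, FiniteDimensional ℂ (W k)]
    (ε : H → ℂ)
    (B1 : ∀ h : H, V1 (G.src h) →L[ℂ] V1 (G.tgt h))
    (B2 : ∀ h : H, V2 (G.src h) →L[ℂ] V2 (G.tgt h))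
    (i1 : ∀ k : I, W k →L[ℂ] V1 k) (i2 : ∀ k : I, W k →L[ℂ] V2 k)
    (j1 : ∀ k : I, V1 k →L[ℂ] W k) (j2 : ∀ k : I, V2 k →L[ℂ] W k)
    (η : ∀ k : I, V2 k →L[ℂ] V1 k) (c : ℂ)

lemma tauInnerSum (h' : H) (C : ∀ h : H, V1 (G.src h) →L[ℂ] V2 (G.tgt h)) :
    (∑ l : I, trace ℂ (V1 l) (((η l).comp (tauTerm G V1 V2 ε B1 B2 C h' l)).toLinearMap))
    = trace ℂ (V1 (G.tgt h')) (((η (G.tgt h')).comp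
        (ε h' • (mixCompA G V1 V2 h' (B2 h') (C (G.bar h'))
          + mixCompB G V1 V2 h' (C h') (B1 (G.bar h'))))).toLinearMap) := by
  rw [Finset.sum_eq_single (G.tgt h')]
  · rw [tauTerm, dif_pos rfl]
    simp
  · intro l _ hne
    rw [tauTerm, dif_neg (fun e => hne e.symm)]
    simp
  · intro habs
    exact absurd (Finset.mem_univ _) habs

lemma pairing_single (h : H) (C₀ : V1 (G.src h) →L[ℂ] V2 (G.tgt h)) :
    (∑ l : I, trace ℂ (V1 l) (((η l).comp
        ((heckeTau G V1 V2 W ε B1 B2 i1 i2 j1 j2 (Pi.single h C₀, 0, 0)).1 l)).toLinearMap))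
      + (heckeTau G V1 V2 W ε B1 B2 i1 i2 j1 j2 (Pi.single h C₀, 0, 0)).2 * c
    = ε h * trace ℂ (V1 (G.tgt h)) (((η (G.tgt h)).comp
          (mixCompB G V1 V2 h C₀ (B1 (G.bar h)))).toLinearMap)
      + ε (G.bar h) * trace ℂ (V1 (G.tgt (G.bar h))) (((η (G.tgt (G.bar h))).comp
          (mixCompA G V1 V2 (G.bar h) (B2 (G.bar h))
            ((vCast V2 (congrArg G.tgt (G.bar_invol h).symm) :
                V2 (G.tgt h) →L[ℂ] V2 (G.tgt (G.bar (G.bar h)))).comp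
              (C₀.comp ((vCast V1 (congrArg G.src (G.bar_invol h).symm)).symm :
                V1 (G.src (G.bar (G.bar h))) →L[ℂ] V1 (G.src h)))))).toLinearMap) := by
  have hsnd : (heckeTau G V1 V2 W ε B1 B2 i1 i2 j1 j2 (Pi.single h C₀, 0, 0)).2 = 0 := by
    refine Finset.sum_eq_zero fun l _ => ?_
    simp
  rw [hsnd, zero_mul, add_zero]
  have hfst : ∀ l, (heckeTau G V1 V2 W ε B1 B2 i1 i2 j1 j2 (Pi.single h C₀, 0, 0)).1 l
      = ∑ h' : H, tauTerm G V1 V2 ε B1 B2 (Pi.single h C₀) h' l := by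
    intro l
    rw [heckeTau_fst]
    simp
  have step1 : (∑ l : I, trace ℂ (V1 l) (((η l).comp
      ((heckeTau G V1 V2 W ε B1 B2 i1 i2 j1 j2 (Pi.single h C₀, 0, 0)).1 l)).toLinearMap))
      = ∑ h' : H, ∑ l : I, trace ℂ (V1 l)
          (((η l).comp (tauTerm G V1 V2 ε B1 B2 (Pi.single h C₀) h' l)).toLinearMap) := by
    rw [Finset.sum_comm]
    refine Finset.sum_congr rfl fun l _ => ?_
    rw [hfst l, ContinuousLinearMap.comp_finset_sum, ContinuousLinearMap.coe_sum, map_sum]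
  rw [step1]
  rw [Finset.sum_congr rfl fun h' _ =>
    tauInnerSum G V1 V2 ε B1 B2 η h' (Pi.single h C₀)]
  simp only [smul_add, ContinuousLinearMap.comp_add, ContinuousLinearMap.comp_smul,
    ContinuousLinearMap.coe_add, ContinuousLinearMap.coe_smul, map_add, map_smul, smul_eq_mul]
  rw [Finset.sum_add_distrib]
  rw [Finset.sum_eq_single (G.bar h)
    (fun h' _ hne => by
      rw [Pi.single_eq_of_ne (fun e : G.bar h' = h => hne (by rw [← G.bar_invol h', e]))]
      simp)
    (fun habs => absurd (Finset.mem_univ _) habs)]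
  rw [Finset.sum_eq_single h
    (fun h' _ hne => by
      rw [Pi.single_eq_of_ne hne]
      simp)
    (fun habs => absurd (Finset.mem_univ _) habs)]
  rw [Pi.single_eq_same]
  rw [fam_congr G V1 V2 (Pi.single h C₀) (G.bar_invol h).symm, Pi.single_eq_same]
  ring

lemma extract_a
    (hvan : ∀ p, (∑ l : I, trace ℂ (V1 l) (((η l).comp
        ((heckeTau G V1 V2 W ε B1 B2 i1 i2 j1 j2 p).1 l)).toLinearMap))
      + (heckeTau G V1 V2 W ε B1 B2 i1 i2 j1 j2 p).2 * c = 0) (k : I) :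
    (j1 k).comp (η k) + c • j2 k = 0 := by
  apply clm_eq_zero_of_trace_comp
  intro a₀
  have hv := hvan (0, Pi.single k a₀, 0)
  have hfst : ∀ l, (heckeTau G V1 V2 W ε B1 B2 i1 i2 j1 j2 (0, Pi.single k a₀, 0)).1 l
      = ((Pi.single k a₀ : ∀ l, W l →L[ℂ] V2 l) l).comp (j1 l) := by
    intro l
    rw [heckeTau_fst]
    simp
  have hsnd : (heckeTau G V1 V2 W ε B1 B2 i1 i2 j1 j2 (0, Pi.single k a₀, 0)).2
      = ∑ l : I, trace ℂ (V2 l) ((((Pi.single k a₀ : ∀ l, W l →L[ℂ] V2 l) l).comp (j2 l)).toLinearMap) := by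
    refine Finset.sum_congr rfl fun l _ => ?_
    simp
  simp only [hfst, hsnd] at hv
  rw [Finset.sum_eq_single k (fun l _ hne => by rw [Pi.single_eq_of_ne hne]; simp)
      (fun habs => absurd (Finset.mem_univ _) habs),
    Finset.sum_eq_single k (fun l _ hne => by rw [Pi.single_eq_of_ne hne]; simp)
      (fun habs => absurd (Finset.mem_univ _) habs),] at hv
  try simp only [Pi.single_eq_same] at hv
  -- hv : tr_{V1 k}(η ∘ (a₀ ∘ j1)) + tr_{V2 k}(a₀ ∘ j2) * c = 0
  have r1 : trace ℂ (W k) ((((j1 k).comp (η k) + c • j2 k).comp a₀).toLinearMap)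
      = trace ℂ (V1 k) (((η k).comp ((a₀.comp (j1 k)))).toLinearMap)
        + c * trace ℂ (V2 k) ((a₀.comp (j2 k)).toLinearMap) := by
    rw [ContinuousLinearMap.add_comp, ContinuousLinearMap.smul_comp,
      ContinuousLinearMap.coe_add, ContinuousLinearMap.coe_smul, map_add, map_smul, smul_eq_mul]
    congr 1
    · rw [ContinuousLinearMap.comp_assoc, trace_rot3_clm, trace_rot3_clm]
    · rw [trace_comp_comm_clm a₀ (j2 k)]
  rw [r1]
  linear_combination hv

lemma extract_b
    (hvan : ∀ p, (∑ l : I, trace ℂ (V1 l) (((η l).comp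
        ((heckeTau G V1 V2 W ε B1 B2 i1 i2 j1 j2 p).1 l)).toLinearMap))
      + (heckeTau G V1 V2 W ε B1 B2 i1 i2 j1 j2 p).2 * c = 0) (k : I) :
    (η k).comp (i2 k) + c • i1 k = 0 := by
  apply clm_eq_zero_of_trace_comp
  intro b₀
  have hv := hvan (0, 0, Pi.single k b₀)
  have hfst : ∀ l, (heckeTau G V1 V2 W ε B1 B2 i1 i2 j1 j2 (0, 0, Pi.single k b₀)).1 l
      = (i2 l).comp ((Pi.single k b₀ : ∀ l, V1 l →L[ℂ] W l) l) := by
    intro l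
    rw [heckeTau_fst]
    simp
  have hsnd : (heckeTau G V1 V2 W ε B1 B2 i1 i2 j1 j2 (0, 0, Pi.single k b₀)).2
      = ∑ l : I, trace ℂ (V1 l) (((i1 l).comp ((Pi.single k b₀ : ∀ l, V1 l →L[ℂ] W l) l)).toLinearMap) := by
    refine Finset.sum_congr rfl fun l _ => ?_
    simp
  simp only [hfst, hsnd] at hv
  rw [Finset.sum_eq_single k (fun l _ hne => by rw [Pi.single_eq_of_ne hne]; simp)
      (fun habs => absurd (Finset.mem_univ _) habs),
    Finset.sum_eq_single k (fun l _ hne => by rw [Pi.single_eq_of_ne hne]; simp)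
      (fun habs => absurd (Finset.mem_univ _) habs),] at hv
  try simp only [Pi.single_eq_same] at hv
  have r1 : trace ℂ (V1 k) ((((η k).comp (i2 k) + c • i1 k).comp b₀).toLinearMap)
      = trace ℂ (V1 k) (((η k).comp ((i2 k).comp b₀)).toLinearMap)
        + c * trace ℂ (V1 k) (((i1 k).comp b₀).toLinearMap) := by
    rw [ContinuousLinearMap.add_comp, ContinuousLinearMap.smul_comp,
      ContinuousLinearMap.coe_add, ContinuousLinearMap.coe_smul, map_add, map_smul, smul_eq_mul,
      ContinuousLinearMap.comp_assoc]
  rw [r1]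
  linear_combination hv

lemma extract_c (hε0 : ∀ h, ε h ≠ 0) (hεbar : ∀ h, ε (G.bar h) = - ε h)
    (hvan : ∀ p, (∑ l : I, trace ℂ (V1 l) (((η l).comp
        ((heckeTau G V1 V2 W ε B1 B2 i1 i2 j1 j2 p).1 l)).toLinearMap))
      + (heckeTau G V1 V2 W ε B1 B2 i1 i2 j1 j2 p).2 * c = 0) (h : H) :
    ∀ x : V2 (G.src (G.bar h)),
      B1 (G.bar h) (η (G.src (G.bar h)) x) = η (G.tgt (G.bar h)) (B2 (G.bar h) x) := by
  set Rtail : V1 (G.tgt h) →L[ℂ] V1 (G.src h) :=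
    (vCast V1 (G.tgt_bar h) : V1 (G.tgt (G.bar h)) →L[ℂ] V1 (G.src h)).comp
      ((B1 (G.bar h)).comp
        ((vCast V1 (G.src_bar h)).symm : V1 (G.tgt h) →L[ℂ] V1 (G.src (G.bar h)))) with hRtail
  set R1 : V2 (G.tgt h) →L[ℂ] V1 (G.src h) := Rtail.comp (η (G.tgt h)) with hR1
  set D2 : V1 (G.tgt (G.bar h)) →L[ℂ] V1 (G.src h) :=
    ((vCast V1 (congrArg G.src (G.bar_invol h).symm)).symm :
        V1 (G.src (G.bar (G.bar h))) →L[ℂ] V1 (G.src h)).comp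
      ((vCast V1 (G.src_bar (G.bar h))).symm :
        V1 (G.tgt (G.bar h)) →L[ℂ] V1 (G.src (G.bar (G.bar h)))) with hD2
  set A2 : V2 (G.tgt h) →L[ℂ] V1 (G.tgt (G.bar h)) :=
    (η (G.tgt (G.bar h))).comp
      ((B2 (G.bar h)).comp
        ((vCast V2 (G.tgt_bar (G.bar h)) :
            V2 (G.tgt (G.bar (G.bar h))) →L[ℂ] V2 (G.src (G.bar h))).comp
          (vCast V2 (congrArg G.tgt (G.bar_invol h).symm) :
            V2 (G.tgt h) →L[ℂ] V2 (G.tgt (G.bar (G.bar h)))))) with hA2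
  set X2 : V2 (G.tgt h) →L[ℂ] V1 (G.src h) := D2.comp A2 with hX2
  have hzero : ε h • R1 + ε (G.bar h) • X2 = 0 := by
    apply clm_eq_zero_of_trace_comp
    intro C₀
    have hp := hvan (Pi.single h C₀, 0, 0)
    rw [pairing_single G V1 V2 W ε B1 B2 i1 i2 j1 j2 η c h C₀] at hp
    have e1 : trace ℂ (V1 (G.src h)) ((R1.comp C₀).toLinearMap)
        = trace ℂ (V1 (G.tgt h)) (((η (G.tgt h)).comp
            (mixCompB G V1 V2 h C₀ (B1 (G.bar h)))).toLinearMap) := by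
      rw [show R1.comp C₀ = Rtail.comp ((η (G.tgt h)).comp C₀) from rfl,
        trace_comp_comm_clm ((η (G.tgt h)).comp C₀) Rtail]
      rfl
    have e2 : trace ℂ (V1 (G.src h)) ((X2.comp C₀).toLinearMap)
        = trace ℂ (V1 (G.tgt (G.bar h))) (((η (G.tgt (G.bar h))).comp
            (mixCompA G V1 V2 (G.bar h) (B2 (G.bar h))
              ((vCast V2 (congrArg G.tgt (G.bar_invol h).symm) :
                  V2 (G.tgt h) →L[ℂ] V2 (G.tgt (G.bar (G.bar h)))).comp
                (C₀.comp ((vCast V1 (congrArg G.src (G.bar_invol h).symm)).symm :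
                  V1 (G.src (G.bar (G.bar h))) →L[ℂ] V1 (G.src h)))))).toLinearMap) := by
      rw [show X2.comp C₀ = D2.comp (A2.comp C₀) from rfl,
        trace_comp_comm_clm (A2.comp C₀) D2]
      rfl
    rw [ContinuousLinearMap.add_comp, ContinuousLinearMap.smul_comp,
      ContinuousLinearMap.smul_comp, ContinuousLinearMap.coe_add,
      ContinuousLinearMap.coe_smul, ContinuousLinearMap.coe_smul, map_add, map_smul, map_smul,
      smul_eq_mul, smul_eq_mul, e1, e2]
    linear_combination hp
  have hRX : R1 = X2 := by
    rw [hεbar h, neg_smul, add_neg_eq_zero] at hzero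
    exact smul_right_injective _ (hε0 h) hzero
  intro x
  have happ := congrArg (fun f : V2 (G.tgt h) →L[ℂ] V1 (G.src h) =>
    (vCast V1 (G.tgt_bar h)).symm (f (vCast V2 (G.src_bar h) x))) hRX
  simp only [hR1, hRtail, hX2, hD2, hA2, ContinuousLinearMap.comp_apply,
    ContinuousLinearEquiv.coe_coe, vCast_symm_apply, vCast_natural η, vCast_vCast,
    vCast_self_apply] at happ
  exact happ

lemma extract_c' (hε0 : ∀ h, ε h ≠ 0) (hεbar : ∀ h, ε (G.bar h) = - ε h)
    (hvan : ∀ p, (∑ l : I, trace ℂ (V1 l) (((η l).comp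
        ((heckeTau G V1 V2 W ε B1 B2 i1 i2 j1 j2 p).1 l)).toLinearMap))
      + (heckeTau G V1 V2 W ε B1 B2 i1 i2 j1 j2 p).2 * c = 0) (g : H) :
    ∀ x : V2 (G.src g), B1 g (η (G.src g) x) = η (G.tgt g) (B2 g x) := by
  have := extract_c G V1 V2 W ε B1 B2 i1 i2 j1 j2 η c hε0 hεbar hvan (G.bar g)
  exact G.bar_invol g ▸ this

end PartD

/-- For stable ADHM data `(B¹,i¹,j¹)`, `(B²,i²,j²)` with `μ = 0` and
`dim V² = dim V¹ + α_{k₀}`, the Hecke three-term sequence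
`L(V¹,V²) →σ→ E(V¹,V²) ⊕ L(W,V²) ⊕ L(V¹,W) →τ→ L(V¹,V²) ⊕ ℂ`
satisfies `τ∘σ = 0`, `σ` is injective and `τ` is surjective. -/
theorem statement12
    {I H : Type} [Fintype I] [Fintype H] [DecidableEq I]
    (G : GraphData I H) (V1 V2 W : I → Type)
    [∀ k, NormedAddCommGroup (V1 k)] [∀ k, NormedSpace ℂ (V1 k)]
    [∀ k, FiniteDimensional ℂ (V1 k)]
    [∀ k, NormedAddCommGroup (V2 k)] [∀ k, NormedSpace ℂ (V2 k)]
    [∀ k, FiniteDimensional ℂ (V2 k)]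
    [∀ k, NormedAddCommGroup (W k)] [∀ k, NormedSpace ℂ (W k)]
    [∀ k, FiniteDimensional ℂ (W k)]
    (ε : H → ℂ) (hε0 : ∀ h, ε h ≠ 0) (hεbar : ∀ h, ε (G.bar h) = - ε h)
    (k0 : I)
    (hdim0 : Module.finrank ℂ (V2 k0) = Module.finrank ℂ (V1 k0) + 1)
    (hdim : ∀ l : I, l ≠ k0 → Module.finrank ℂ (V2 l) = Module.finrank ℂ (V1 l))
    (B1 : ∀ h : H, V1 (G.src h) →L[ℂ] V1 (G.tgt h))
    (i1 : ∀ k : I, W k →L[ℂ] V1 k) (j1 : ∀ k : I, V1 k →L[ℂ] W k)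
    (B2 : ∀ h : H, V2 (G.src h) →L[ℂ] V2 (G.tgt h))
    (i2 : ∀ k : I, W k →L[ℂ] V2 k) (j2 : ∀ k : I, V2 k →L[ℂ] W k)
    (hst1 : IsStable G V1 W B1 j1) (hst2 : IsStable G V2 W B2 j2)
    (hμ1 : ∀ k : I, momentMap G V1 W ε B1 i1 j1 k = 0)
    (hμ2 : ∀ k : I, momentMap G V2 W ε B2 i2 j2 k = 0) :
    (∀ ξ : ∀ k : I, V1 k →L[ℂ] V2 k,
      heckeTau G V1 V2 W ε B1 B2 i1 i2 j1 j2
        (heckeSigma G V1 V2 W B1 B2 i1 j2 ξ) = 0) ∧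
    Function.Injective (heckeSigma G V1 V2 W B1 B2 i1 j2) ∧
    Function.Surjective (heckeTau G V1 V2 W ε B1 B2 i1 i2 j1 j2) := by
  classical
  refine ⟨?_, sigma_injective G V1 V2 W B1 B2 i1 j2 hst2, ?_⟩
  · -- τ ∘ σ = 0
    intro ξ
    refine Prod.ext ?_ ?_
    · funext k
      rw [partA_first G V1 V2 W ε B1 B2 i1 i2 j1 j2 ξ k, hμ1 k, hμ2 k]
      simp
    · rw [partA_second G V1 V2 W ε B1 B2 i1 i2 j1 j2 ξ]
      rfl
  · -- τ surjective
    have key : Function.Surjective ⇑(heckeTauL G V1 V2 W ε B1 B2 i1 i2 j1 j2) := by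
      rw [← LinearMap.range_eq_top]
      by_contra hne
      obtain ⟨φ, hφ0, hφmap⟩ := Submodule.exists_dual_map_eq_bot_of_lt_top
        (lt_top_iff_ne_top.mpr hne) inferInstance
      have hvanφ : ∀ p, φ (heckeTau G V1 V2 W ε B1 B2 i1 i2 j1 j2 p) = 0 := by
        intro p
        have hmem : heckeTau G V1 V2 W ε B1 B2 i1 i2 j1 j2 p
            ∈ LinearMap.range (heckeTauL G V1 V2 W ε B1 B2 i1 i2 j1 j2) := ⟨p, rfl⟩
        have hm2 : φ (heckeTau G V1 V2 W ε B1 B2 i1 i2 j1 j2 p)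
            ∈ Submodule.map φ (LinearMap.range (heckeTauL G V1 V2 W ε B1 B2 i1 i2 j1 j2)) :=
          Submodule.mem_map_of_mem hmem
        rw [hφmap] at hm2
        simpa using hm2
      set ψ : ∀ l : I, Module.Dual ℂ (V1 l →L[ℂ] V2 l) := fun l =>
        φ ∘ₗ ((LinearMap.inl ℂ (∀ k : I, V1 k →L[ℂ] V2 k) ℂ) ∘ₗ
          (LinearMap.single ℂ (fun k : I => V1 k →L[ℂ] V2 k) l)) with hψ
      choose η hη using fun l => exists_trace_rep (ψ l)
      set c : ℂ := φ (0, 1) with hc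
      have hφrep : ∀ y : (∀ k : I, V1 k →L[ℂ] V2 k) × ℂ,
          φ y = (∑ l : I, LinearMap.trace ℂ (V1 l) (((η l).comp (y.1 l)).toLinearMap))
            + y.2 * c := by
        intro y
        have h1 : y = (y.1, (0:ℂ)) + ((0 : ∀ k : I, V1 k →L[ℂ] V2 k), y.2) := by
          ext <;> simp
        conv_lhs => rw [h1, map_add]
        have h2 : φ (y.1, (0:ℂ)) = ∑ l : I, φ (Pi.single l (y.1 l), 0) := by
          have hy1 : (y.1, (0:ℂ))
              = ∑ l : I, ((Pi.single l (y.1 l) : ∀ k : I, V1 k →L[ℂ] V2 k), (0:ℂ)) := by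
            rw [Prod.ext_iff]
            constructor
            · rw [Prod.fst_sum]
              funext k
              rw [Finset.sum_apply]
              exact (Fintype.sum_pi_single k y.1).symm
            · rw [Prod.snd_sum]
              simp
          rw [hy1, map_sum]
        have h3 : φ ((0 : ∀ k : I, V1 k →L[ℂ] V2 k), y.2) = y.2 * c := by
          have : ((0 : ∀ k : I, V1 k →L[ℂ] V2 k), y.2)
              = y.2 • ((0 : ∀ k : I, V1 k →L[ℂ] V2 k), (1:ℂ)) := by
            ext <;> simp
          rw [this, map_smul, hc, smul_eq_mul]
        rw [h2, h3]
        congr 1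
        refine Finset.sum_congr rfl fun l _ => ?_
        have : φ (Pi.single l (y.1 l), 0) = ψ l (y.1 l) := rfl
        rw [this, hη l (y.1 l)]
      have hvan : ∀ p, (∑ l : I, LinearMap.trace ℂ (V1 l) (((η l).comp
          ((heckeTau G V1 V2 W ε B1 B2 i1 i2 j1 j2 p).1 l)).toLinearMap))
          + (heckeTau G V1 V2 W ε B1 B2 i1 i2 j1 j2 p).2 * c = 0 := by
        intro p
        rw [← hφrep]
        exact hvanφ p
      have hA := extract_a G V1 V2 W ε B1 B2 i1 i2 j1 j2 η c hvan
      have hBB := extract_b G V1 V2 W ε B1 B2 i1 i2 j1 j2 η c hvan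
      have hC := extract_c' G V1 V2 W ε B1 B2 i1 i2 j1 j2 η c hε0 hεbar hvan
      by_cases hczero : c = 0
      · -- then η = 0 and φ = 0, contradiction
        have hS := hst1 (fun k => LinearMap.range ((η k : V2 k →L[ℂ] V1 k) : V2 k →ₗ[ℂ] V1 k))
          (by
            rintro h x ⟨y, rfl⟩
            exact ⟨B2 h y, (hC h y).symm⟩)
          (by
            rintro k x ⟨y, rfl⟩
            have := ContinuousLinearMap.ext_iff.mp (hA k) y
            simpa [hczero] using this)
        have hη0 : ∀ k, η k = 0 := by
          intro k
          have := LinearMap.range_eq_bot.mp (hS k)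
          exact ContinuousLinearMap.coe_injective (by simpa using this)
        apply hφ0
        apply LinearMap.ext
        intro y
        rw [hφrep y]
        simp [hη0, hczero]
      · -- c ≠ 0 : η is injective everywhere, contradicting dimensions
        have hker := hst2 (fun k => LinearMap.ker ((η k : V2 k →L[ℂ] V1 k) : V2 k →ₗ[ℂ] V1 k))
          (by
            intro h x hx
            have hx0 : η (G.src h) x = 0 := hx
            have : B1 h (η (G.src h) x) = η (G.tgt h) (B2 h x) := hC h x
            rw [hx0, map_zero] at this
            exact LinearMap.mem_ker.mpr this.symm)
          (by
            intro k x hx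
            have hx0 : η k x = 0 := hx
            have := ContinuousLinearMap.ext_iff.mp (hA k) x
            simp only [ContinuousLinearMap.add_apply, ContinuousLinearMap.comp_apply,
              ContinuousLinearMap.smul_apply, ContinuousLinearMap.zero_apply, hx0,
              map_zero, zero_add] at this
            have := smul_eq_zero.mp this
            tauto)
        have hinj : Function.Injective (η k0) := by
          have := LinearMap.ker_eq_bot.mp (hker k0)
          exact this
        have hle : Module.finrank ℂ (V2 k0) ≤ Module.finrank ℂ (V1 k0) :=
          LinearMap.finrank_le_finrank_of_injective
            (f := ((η k0 : V2 k0 →L[ℂ] V1 k0) : V2 k0 →ₗ[ℂ] V1 k0)) hinj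
        omega
    exact key
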